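/- arXiv:1611.04412 — 3 statements merged into one kernel-verified Lean document; each statement's English description precedes it below -/
import Mathlib

section
/- Let A ⊆ R ⊆ S be commutative Noetherian rings such that the inclusion R ⊆ S admits an R-linear splitting β : S → R (β|_R = id_R), and let M ⊆ N be a differential direct summand compatible with β. If V and W are D_{R|A}-submodules of M such that the D_{S|A}-submodules of N generated by V and by W coincide (D_{S|A}·V = D_{S|A}·W), then V = W. -/
/-- `δ` is an `A`-linear differential operator on `R` of order at most `n`. -/
def IsDiffOpOfOrder (A : Type*) {R : Type*} [CommRing A] [CommRing R] [Algebra A R] :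
    ℕ → (R →ₗ[A] R) → Prop
  | 0 => fun δ => ∃ r : R, ∀ x, δ x = r * x
  | (n+1) => fun δ => ∀ r : R,
      IsDiffOpOfOrder A n (δ ∘ₗ LinearMap.mulLeft A r - LinearMap.mulLeft A r ∘ₗ δ)

/-- `δ` is an `A`-linear differential operator on `R`. -/
def IsDiffOp (A : Type*) {R : Type*} [CommRing A] [CommRing R] [Algebra A R]
    (δ : R →ₗ[A] R) : Prop :=
  ∃ n, IsDiffOpOfOrder A n δ

/-- Restriction `β ∘ δ|_R` of a differential operator `δ` on `S` along the
`R`-linear splitting `β : S → R`. -/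
def restrictOp (A R S : Type*) [CommRing A] [CommRing R] [CommRing S]
    [Algebra A R] [Algebra A S] [Algebra R S] [IsScalarTower A R S]
    (β : S →ₗ[R] R) (δ : S →ₗ[A] S) : R →ₗ[A] R :=
  (β.restrictScalars A) ∘ₗ δ ∘ₗ ((IsScalarTower.toAlgHom A R S).toLinearMap)

/-- A `D_{R|A}`-module structure on an `R`-module `M`. -/
structure DAction (A R : Type*) [CommRing A] [CommRing R] [Algebra A R]
    (M : Type*) [AddCommGroup M] [Module A M] [Module R M] [IsScalarTower A R M] where
  act : (R →ₗ[A] R) → (M →ₗ[A] M)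
  act_mulLeft : ∀ (r : R) (m : M), act (LinearMap.mulLeft A r) m = r • m
  act_add : ∀ δ₁ δ₂, IsDiffOp A δ₁ → IsDiffOp A δ₂ → act (δ₁ + δ₂) = act δ₁ + act δ₂
  act_comp : ∀ δ₁ δ₂, IsDiffOp A δ₁ → IsDiffOp A δ₂ → act (δ₁ ∘ₗ δ₂) = act δ₁ ∘ₗ act δ₂

/-- The tautological `D_{R|A}`-module structure on `R` itself. -/
def tautDAction (A R : Type*) [CommRing A] [CommRing R] [Algebra A R] : DAction A R R where
  act δ := δ
  act_mulLeft r m := by simp [LinearMap.mulLeft_apply, smul_eq_mul]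
  act_add _ _ _ _ := rfl
  act_comp _ _ _ _ := rfl

/-- A differential direct summand `M ⊆ N` compatible with the splitting `β`. -/
structure DiffDirectSummand {A R S : Type*} [CommRing A] [CommRing R] [CommRing S]
    [Algebra A R] [Algebra A S] [Algebra R S] [IsScalarTower A R S]
    (β : S →ₗ[R] R)
    {M : Type*} [AddCommGroup M] [Module A M] [Module R M] [IsScalarTower A R M]
    {N : Type*} [AddCommGroup N] [Module A N] [Module R N] [Module S N]
    [IsScalarTower A S N] [IsScalarTower R S N] [IsScalarTower A R N]
    (actM : DAction A R M) (actN : DAction A S N) where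
  incl : M →ₗ[R] N
  incl_injective : Function.Injective incl
  theta : N →ₗ[R] M
  split : ∀ m : M, theta (incl m) = m
  compat : ∀ (δ : S →ₗ[A] S), IsDiffOp A δ → ∀ m : M,
      theta (actN.act δ (incl m)) = actM.act (restrictOp A R S β δ) m

/-- `V` is a `D_{R|A}`-submodule of `M`. -/
def DAction.IsDSubmodule {A R : Type*} [CommRing A] [CommRing R] [Algebra A R]
    {M : Type*} [AddCommGroup M] [Module A M] [Module R M] [IsScalarTower A R M]
    (a : DAction A R M) (V : Submodule R M) : Prop :=
  ∀ δ : R →ₗ[A] R, IsDiffOp A δ → ∀ v ∈ V, a.act δ v ∈ V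

/-- The length of `M` as a `D_{R|A}`-module: the supremum of lengths of chains of
`D_{R|A}`-submodules of `M`. -/
noncomputable def dLength {A R : Type*} [CommRing A] [CommRing R] [Algebra A R]
    {M : Type*} [AddCommGroup M] [Module A M] [Module R M] [IsScalarTower A R M]
    (a : DAction A R M) : WithBot ℕ∞ :=
  Order.krullDim {V : Submodule R M // a.IsDSubmodule V}

/-- The canonical (localized) `D`-module structure on a localization: the one making
the localization map equivariant. -/
def IsLocalizedDAction {A R : Type*} [CommRing A] [CommRing R] [Algebra A R]
    {M Mf : Type*} [AddCommGroup M] [Module A M] [Module R M] [IsScalarTower A R M]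
    [AddCommGroup Mf] [Module A Mf] [Module R Mf] [IsScalarTower A R Mf]
    (ℓ : M →ₗ[R] Mf) (a : DAction A R M) (a' : DAction A R Mf) : Prop :=
  ∀ δ : R →ₗ[A] R, IsDiffOp A δ → ∀ m : M, a'.act δ (ℓ m) = ℓ (a.act δ m)

/-- A morphism of differential direct summands. -/
structure IsDDSHom {A R S : Type*} [CommRing A] [CommRing R] [CommRing S]
    [Algebra A R] [Algebra A S] [Algebra R S] [IsScalarTower A R S]
    {β : S →ₗ[R] R}
    {M₁ : Type*} [AddCommGroup M₁] [Module A M₁] [Module R M₁] [IsScalarTower A R M₁]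
    {N₁ : Type*} [AddCommGroup N₁] [Module A N₁] [Module R N₁] [Module S N₁]
    [IsScalarTower A S N₁] [IsScalarTower R S N₁] [IsScalarTower A R N₁]
    {M₂ : Type*} [AddCommGroup M₂] [Module A M₂] [Module R M₂] [IsScalarTower A R M₂]
    {N₂ : Type*} [AddCommGroup N₂] [Module A N₂] [Module R N₂] [Module S N₂]
    [IsScalarTower A S N₂] [IsScalarTower R S N₂] [IsScalarTower A R N₂]
    {actM₁ : DAction A R M₁} {actN₁ : DAction A S N₁}
    {actM₂ : DAction A R M₂} {actN₂ : DAction A S N₂}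
    (dds₁ : DiffDirectSummand β actM₁ actN₁) (dds₂ : DiffDirectSummand β actM₂ actN₂)
    (φ : N₁ →ₗ[S] N₂) (ψ : M₁ →ₗ[R] M₂) : Prop where
  comm_incl : ∀ m : M₁, φ (dds₁.incl m) = dds₂.incl (ψ m)
  equivN : ∀ δ : S →ₗ[A] S, IsDiffOp A δ → ∀ x : N₁, φ (actN₁.act δ x) = actN₂.act δ (φ x)
  equivM : ∀ δ : R →ₗ[A] R, IsDiffOp A δ → ∀ m : M₁, ψ (actM₁.act δ m) = actM₂.act δ (ψ m)
  comm_theta : ∀ x : N₁, ψ (dds₁.theta x) = dds₂.theta (φ x)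

/-- The `D_{S|A}`-submodule of `N` generated by a submodule `V` of `M`. -/
def dSpan {A R S : Type*} [CommRing A] [CommRing R] [CommRing S]
    [Algebra A R] [Algebra A S] [Algebra R S] [IsScalarTower A R S]
    {β : S →ₗ[R] R}
    {M : Type*} [AddCommGroup M] [Module A M] [Module R M] [IsScalarTower A R M]
    {N : Type*} [AddCommGroup N] [Module A N] [Module R N] [Module S N]
    [IsScalarTower A S N] [IsScalarTower R S N] [IsScalarTower A R N]
    {actM : DAction A R M} {actN : DAction A S N}
    (dds : DiffDirectSummand β actM actN) (V : Submodule R M) : Submodule S N :=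
  Submodule.span S {x : N | ∃ δ : S →ₗ[A] S, IsDiffOp A δ ∧ ∃ v ∈ V, x = actN.act δ (dds.incl v)}

/-!
For `w ∈ W`, a differential operator `δ` on `S` and `s ∈ S`, compatibility of `θ` with `β` gives
`θ (s • δ w) = θ ((s δ) w) = (β ∘ (s δ)|_R) w ∈ W`, so `θ (s • x) ∈ W` for every `x ∈ D_{S|A} W`.
If `D_{S|A} V ≤ D_{S|A} W`, then each `v ∈ V` lies in `D_{S|A} W` and `v = θ v ∈ W`.
-/

section DiffOp

variable {A R : Type*} [CommRing A] [CommRing R] [Algebra A R]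

lemma isDiffOp_mulLeft (r : R) : IsDiffOp A (LinearMap.mulLeft A r) :=
  ⟨0, r, fun _ => rfl⟩

lemma isDiffOpOfOrder_mulLeft_comp (s : R) :
    ∀ {n : ℕ} {δ : R →ₗ[A] R}, IsDiffOpOfOrder A n δ →
      IsDiffOpOfOrder A n (LinearMap.mulLeft A s ∘ₗ δ)
  | 0, δ, ⟨r, hr⟩ => ⟨s * r, fun x => by simp [hr x, mul_assoc]⟩
  | n + 1, δ, hδ => fun r => by
      have hcomm : (LinearMap.mulLeft A s ∘ₗ δ) ∘ₗ LinearMap.mulLeft A r -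
          LinearMap.mulLeft A r ∘ₗ (LinearMap.mulLeft A s ∘ₗ δ) =
          LinearMap.mulLeft A s ∘ₗ
            (δ ∘ₗ LinearMap.mulLeft A r - LinearMap.mulLeft A r ∘ₗ δ) := by
        ext x
        simp only [LinearMap.sub_apply, LinearMap.comp_apply, LinearMap.mulLeft_apply]
        ring
      rw [hcomm]
      exact isDiffOpOfOrder_mulLeft_comp s (hδ r)

lemma IsDiffOp.mulLeft_comp (s : R) {δ : R →ₗ[A] R} (hδ : IsDiffOp A δ) :
    IsDiffOp A (LinearMap.mulLeft A s ∘ₗ δ) :=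
  hδ.imp fun _ => isDiffOpOfOrder_mulLeft_comp s

lemma DAction.act_mulLeft_comp {M : Type*} [AddCommGroup M] [Module A M] [Module R M]
    [IsScalarTower A R M] (a : DAction A R M) (s : R) {δ : R →ₗ[A] R} (hδ : IsDiffOp A δ)
    (m : M) : a.act (LinearMap.mulLeft A s ∘ₗ δ) m = s • a.act δ m := by
  rw [a.act_comp _ _ (isDiffOp_mulLeft s) hδ, LinearMap.comp_apply, a.act_mulLeft]

end DiffOp

section Restrict

variable {A R S : Type*} [CommRing A] [CommRing R] [CommRing S]
  [Algebra A R] [Algebra A S] [Algebra R S] [IsScalarTower A R S] (β : S →ₗ[R] R)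

lemma restrictOp_apply (δ : S →ₗ[A] S) (x : R) :
    restrictOp A R S β δ x = β (δ (algebraMap R S x)) :=
  rfl

lemma isDiffOpOfOrder_restrictOp :
    ∀ {n : ℕ} {δ : S →ₗ[A] S}, IsDiffOpOfOrder A n δ →
      IsDiffOpOfOrder A n (restrictOp A R S β δ)
  | 0, δ, ⟨s, hs⟩ => ⟨β s, fun x => by
      rw [restrictOp_apply, hs, ← Algebra.commutes, ← Algebra.smul_def, map_smul,
        smul_eq_mul, mul_comm]⟩
  | n + 1, δ, hδ => fun r => by
      have hcomm : restrictOp A R S β δ ∘ₗ LinearMap.mulLeft A r -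
          LinearMap.mulLeft A r ∘ₗ restrictOp A R S β δ =
          restrictOp A R S β (δ ∘ₗ LinearMap.mulLeft A (algebraMap R S r) -
            LinearMap.mulLeft A (algebraMap R S r) ∘ₗ δ) := by
        ext x
        simp only [LinearMap.sub_apply, LinearMap.comp_apply, restrictOp_apply,
          LinearMap.mulLeft_apply, map_mul, map_sub, ← Algebra.smul_def, map_smul,
          smul_eq_mul]
      rw [hcomm]
      exact isDiffOpOfOrder_restrictOp (hδ (algebraMap R S r))

lemma IsDiffOp.restrictOp {δ : S →ₗ[A] S} (hδ : IsDiffOp A δ) :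
    IsDiffOp A (restrictOp A R S β δ) :=
  hδ.imp fun _ => isDiffOpOfOrder_restrictOp β

end Restrict

namespace DiffDirectSummand

variable {A R S : Type*} [CommRing A] [CommRing R] [CommRing S]
  [Algebra A R] [Algebra A S] [Algebra R S] [IsScalarTower A R S] {β : S →ₗ[R] R}
  {M : Type*} [AddCommGroup M] [Module A M] [Module R M] [IsScalarTower A R M]
  {N : Type*} [AddCommGroup N] [Module A N] [Module R N] [Module S N]
  [IsScalarTower A S N] [IsScalarTower R S N] [IsScalarTower A R N]
  {actM : DAction A R M} {actN : DAction A S N}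
  (dds : DiffDirectSummand β actM actN)

lemma incl_mem_dSpan {V : Submodule R M} {v : M} (hv : v ∈ V) : dds.incl v ∈ dSpan dds V :=
  Submodule.subset_span ⟨LinearMap.mulLeft A 1, isDiffOp_mulLeft 1, v, hv, by
    rw [actN.act_mulLeft, one_smul]⟩

lemma theta_smul_mem_of_mem_dSpan {W : Submodule R M} (hW : actM.IsDSubmodule W)
    {x : N} (hx : x ∈ dSpan dds W) (s : S) : dds.theta (s • x) ∈ W := by
  induction hx using Submodule.span_induction generalizing s with
  | mem x hx =>
    obtain ⟨δ, hδ, w, hw, rfl⟩ := hx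
    rw [← actN.act_mulLeft_comp s hδ, dds.compat _ (hδ.mulLeft_comp s)]
    exact hW _ ((hδ.mulLeft_comp s).restrictOp β) w hw
  | zero => simp
  | add x y _ _ hx hy =>
    rw [smul_add, map_add]
    exact W.add_mem (hx s) (hy s)
  | smul t x _ hx =>
    rw [smul_smul]
    exact hx (s * t)

lemma le_of_dSpan_le {V W : Submodule R M} (hW : actM.IsDSubmodule W)
    (hle : dSpan dds V ≤ dSpan dds W) : V ≤ W := fun v hv => by
  simpa [dds.split] using dds.theta_smul_mem_of_mem_dSpan hW (hle (dds.incl_mem_dSpan hv)) 1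

end DiffDirectSummand

theorem eq_of_dSpan_eq_general
    (A R S : Type*) [CommRing A] [CommRing R] [CommRing S]
    [Algebra A R] [Algebra A S] [Algebra R S] [IsScalarTower A R S]
    (β : S →ₗ[R] R)
    (M : Type*) [AddCommGroup M] [Module A M] [Module R M] [IsScalarTower A R M]
    (N : Type*) [AddCommGroup N] [Module A N] [Module R N] [Module S N]
    [IsScalarTower A S N] [IsScalarTower R S N] [IsScalarTower A R N]
    (actM : DAction A R M) (actN : DAction A S N)
    (dds : DiffDirectSummand β actM actN)
    (V W : Submodule R M) (hV : actM.IsDSubmodule V) (hW : actM.IsDSubmodule W)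
    (h : dSpan dds V = dSpan dds W) : V = W :=
  le_antisymm (dds.le_of_dSpan_le hW h.le) (dds.le_of_dSpan_le hV h.ge)

/-- Lemma `LemmaEqSubmod`.  Let `A ⊆ R ⊆ S` be Noetherian rings such
that the inclusion `R ⊆ S` has an `R`-linear splitting `β`, and let `M ⊆ N` be a
differential direct summand compatible with `β`.  If `V, W` are `D_{R|A}`-submodules of
`M` with `D_{S|A}·V = D_{S|A}·W` inside `N`, then `V = W`. -/
theorem eq_of_dSpan_eq
    (A R S : Type*) [CommRing A] [CommRing R] [CommRing S]
    [IsNoetherianRing A] [IsNoetherianRing R] [IsNoetherianRing S]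
    [Algebra A R] [Algebra A S] [Algebra R S] [IsScalarTower A R S]
    (hAR : Function.Injective (algebraMap A R))
    (hRS : Function.Injective (algebraMap R S))
    (β : S →ₗ[R] R) (hβ : ∀ r : R, β (algebraMap R S r) = r)
    (M : Type*) [AddCommGroup M] [Module A M] [Module R M] [IsScalarTower A R M]
    (N : Type*) [AddCommGroup N] [Module A N] [Module R N] [Module S N]
    [IsScalarTower A S N] [IsScalarTower R S N] [IsScalarTower A R N]
    (actM : DAction A R M) (actN : DAction A S N)
    (dds : DiffDirectSummand β actM actN)
    (V W : Submodule R M) (hV : actM.IsDSubmodule V) (hW : actM.IsDSubmodule W)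
    (h : dSpan dds V = dSpan dds W) : V = W :=
  eq_of_dSpan_eq_general A R S β M N actM actN dds V W hV hW h
end

section
/- Let S be a regular F-finite domain of prime characteristic p, and let R ⊆ S be an F-finite Noetherian subring such that the inclusion R ⊆ S admits an R-linear splitting β : S → R. Let I ⊆ R be an ideal and λ₁, λ₂ ∈ ℝ_{>0}. If τ_S((IS)^{λ₁}) = τ_S((IS)^{λ₂}), then τ_R(I^{λ₁}) = τ_R(I^{λ₂}). -/
/-- `δ : R → R` is an `R^{p^e}`-linear (additive) endomorphism of `R`, i.e. an element
of `D^{(e)}_R = Hom_{R^{p^e}}(R, R)`. -/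
def IsPeLinearMap (p e : ℕ) {R : Type*} [CommRing R] (δ : R → R) : Prop :=
  (∀ x y, δ (x + y) = δ x + δ y) ∧ ∀ r x, δ (r ^ p ^ e * x) = r ^ p ^ e * δ x

/-- `φ : R → R` is a `p^{-e}`-linear (Cartier) map: `φ` is additive and
`φ(r^{p^e}·x) = r·φ(x)`. -/
def IsCartierMap (p e : ℕ) {R : Type*} [CommRing R] (φ : R → R) : Prop :=
  (∀ x y, φ (x + y) = φ x + φ y) ∧ ∀ r x, φ (r ^ p ^ e * x) = r * φ x

/-- The ideal `D^{(e)}_R I` generated by the values of `R^{p^e}`-linear endomorphisms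
on elements of `I`. -/
def diffOpIdeal (p e : ℕ) {R : Type*} [CommRing R] (I : Ideal R) : Ideal R :=
  Ideal.span {y | ∃ δ : R → R, IsPeLinearMap p e δ ∧ ∃ x ∈ I, y = δ x}

/-- The ideal `C^e_R I` generated by the values of `p^{-e}`-linear maps on elements
of `I`. -/
def cartierIdeal (p e : ℕ) {R : Type*} [CommRing R] (I : Ideal R) : Ideal R :=
  Ideal.span {y | ∃ φ : R → R, IsCartierMap p e φ ∧ ∃ x ∈ I, y = φ x}

/-- The (big) test ideal `τ_R(I^λ) = ⋃_e C^e_R I^{⌈p^e λ⌉}`. -/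
noncomputable def testIdeal (p : ℕ) {R : Type*} [CommRing R] (I : Ideal R) (l : ℝ) :
    Ideal R :=
  ⨆ e : ℕ, cartierIdeal p e (I ^ ⌈(p : ℝ) ^ e * l⌉₊)

/-- `R` is `F`-finite: `R` is a finitely generated module over its subring `R^p`
of `p`-th powers. -/
def IsFFinite (p : ℕ) (R : Type*) [CommRing R] : Prop :=
  ∃ (n : ℕ) (g : Fin n → R), ∀ x : R, ∃ c : Fin n → R, x = ∑ i, (c i) ^ p * g i

/-- `R` is `F`-pure: for every `e ≥ 1` there is a `p^{-e}`-linear map `γ : R → R`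
with `γ(1) = 1`. -/
def IsFPure (p : ℕ) (R : Type*) [CommRing R] : Prop :=
  ∀ e : ℕ, 1 ≤ e → ∃ γ : R → R, IsCartierMap p e γ ∧ γ 1 = 1

/-- Regularity of a Noetherian ring of prime characteristic `p`, via Kunz's theorem:
the Frobenius endomorphism is flat. -/
def IsRegularKunz (p : ℕ) (S : Type*) [CommRing S] : Prop :=
  ∃ F : S →+* S, (∀ x, F x = x ^ p) ∧ F.Flat

/-- The Frobenius power `𝔞^{[p^e]}` of an ideal. -/
def frobeniusPower (p e : ℕ) {R : Type*} [CommRing R] (a : Ideal R) : Ideal R :=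
  Ideal.span ((fun x => x ^ p ^ e) '' (a : Set R))

/-- `ν^𝔞_J(p^e) = max { t | Jᵗ ⊄ 𝔞^{[p^e]} }`. -/
noncomputable def fThresholdNu (p : ℕ) {R : Type*} [CommRing R] (J a : Ideal R)
    (e : ℕ) : ℕ :=
  sSup {t : ℕ | ¬ J ^ t ≤ frobeniusPower p e a}

/-- The set of `F`-jumping numbers of an ideal `I`. -/
noncomputable def fJumpingNumbers (p : ℕ) {R : Type*} [CommRing R] (I : Ideal R) :
    Set ℝ :=
  {l : ℝ | 0 < l ∧ ∀ ε : ℝ, 0 < ε → testIdeal p I l ≠ testIdeal p I (l - ε)}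

/-! ### Auxiliary lemmas -/

section Aux

variable {p e : ℕ}

lemma IsCartierMap.map_zero' {R : Type*} [CommRing R] {φ : R → R}
    (h : IsCartierMap p e φ) : φ 0 = 0 := by
  have h0 := h.1 0 0
  rw [add_zero] at h0
  exact left_eq_add.mp h0

lemma IsCartierMap.comp_mul {S : Type*} [CommRing S] {θ : S → S}
    (h : IsCartierMap p e θ) (s : S) : IsCartierMap p e (fun u => θ (s * u)) := by
  refine ⟨fun x y => ?_, fun r x => ?_⟩
  · show θ (s * (x + y)) = θ (s * x) + θ (s * y)
    rw [mul_add, h.1]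
  · show θ (s * (r ^ p ^ e * x)) = r * θ (s * x)
    have hsx : s * (r ^ p ^ e * x) = r ^ p ^ e * (s * x) := by ring
    rw [hsx, h.2]

/-- `S` is finitely generated over its subring of `p^e`-th powers, for every `e`. -/
lemma IsFFinite.exists_gen (hp : p.Prime) {S : Type*} [CommRing S] [CharP S p]
    (hFFS : IsFFinite p S) (e : ℕ) :
    ∃ (ι : Type) (_ : Fintype ι) (g : ι → S), ∀ x : S, ∃ c : ι → S,
      x = ∑ i, c i ^ p ^ e * g i := by
  haveI := Fact.mk hp
  haveI : ExpChar S p := .prime hp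
  induction e with
  | zero =>
    refine ⟨PUnit, inferInstance, fun _ => 1, fun x => ⟨fun _ => x, ?_⟩⟩
    simp
  | succ e ih =>
    obtain ⟨ι, hι, g, hg⟩ := ih
    obtain ⟨m, gm, hgm⟩ := hFFS
    letI := hι
    refine ⟨ι × Fin m, inferInstance, fun ij => gm ij.2 ^ p ^ e * g ij.1, fun x => ?_⟩
    obtain ⟨c, hc⟩ := hg x
    choose d hd using fun i => hgm (c i)
    refine ⟨fun ij => d ij.1 ij.2, ?_⟩
    have hsumpow : ∀ (t : Fin m → S), (∑ j, t j) ^ p ^ e = ∑ j, t j ^ p ^ e := fun t => by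
      simpa only [iterateFrobenius_def] using map_sum (iterateFrobenius S p e) t Finset.univ
    have hpow : ∀ a b : S, (a ^ p * b) ^ p ^ e = a ^ p ^ (e + 1) * b ^ p ^ e := by
      intro a b
      have hpe : p * p ^ e = p ^ (e + 1) := by rw [pow_succ, mul_comm]
      rw [mul_pow, ← pow_mul, hpe]
    calc x = ∑ i, c i ^ p ^ e * g i := hc
      _ = ∑ i, (∑ j, d i j ^ p * gm j) ^ p ^ e * g i := by
          refine Finset.sum_congr rfl fun i _ => ?_
          rw [← hd i]
      _ = ∑ i, (∑ j, d i j ^ p ^ (e + 1) * gm j ^ p ^ e) * g i := by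
          refine Finset.sum_congr rfl fun i _ => ?_
          rw [hsumpow]
          congr 1
          refine Finset.sum_congr rfl fun j _ => ?_
          rw [hpow]
      _ = ∑ i, ∑ j, d i j ^ p ^ (e + 1) * (gm j ^ p ^ e * g i) := by
          refine Finset.sum_congr rfl fun i _ => ?_
          rw [Finset.sum_mul]
          refine Finset.sum_congr rfl fun j _ => ?_
          ring
      _ = ∑ ij : ι × Fin m, d ij.1 ij.2 ^ p ^ (e + 1) * (gm ij.2 ^ p ^ e * g ij.1) := by
          rw [Fintype.sum_prod_type]

end Aux

/-- Type synonym for `S` viewed as a module over itself through the `e`-th iterated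
Frobenius endomorphism (i.e. `F^e_* S`). -/
def FrobAlg (p e : ℕ) (S : Type*) := S

instance (p e : ℕ) (S : Type*) [CommRing S] : CommRing (FrobAlg p e S) :=
  inferInstanceAs (CommRing S)

/-- The identity of `S`, viewed as a map into `F^e_* S`. -/
def toFrob (p e : ℕ) {S : Type*} (s : S) : FrobAlg p e S := s

/-- The identity of `S`, viewed as a map out of `F^e_* S`. -/
def ofFrob (p e : ℕ) {S : Type*} (s : FrobAlg p e S) : S := s

section KeyFact

/-- Flatness of the iterated Frobenius, from flatness of the Frobenius (Kunz). -/
lemma flat_iterateFrobenius {p : ℕ} (hp : p.Prime) (S : Type*) [CommRing S] [ExpChar S p]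
    (hreg : IsRegularKunz p S) (e : ℕ) : (iterateFrobenius S p e).Flat := by
  obtain ⟨F, hF, hFflat⟩ := hreg
  have hFeq : F = frobenius S p := RingHom.ext fun x => hF x
  haveI hfrob : (frobenius S p).Flat := hFeq ▸ hFflat
  induction e with
  | zero =>
    rw [iterateFrobenius_zero]
    exact RingHom.Flat.id S
  | succ e ih =>
    haveI := ih
    have heq : iterateFrobenius S p (e + 1) =
        (iterateFrobenius S p 1).comp (iterateFrobenius S p e) := by
      rw [show e + 1 = 1 + e from Nat.add_comm e 1, iterateFrobenius_add]
    rw [heq, iterateFrobenius_one]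
    exact RingHom.Flat.comp ih hfrob

/-- **Dual basis of Cartier maps.** For a regular (Kunz) `F`-finite Noetherian ring `S`
of characteristic `p`, every element `s₀` can be written `s₀ = ∑ θᵥ(s₀)^{p^e}·v` for
finitely many `p^{-e}`-linear maps `θᵥ`. -/
lemma exists_cartier_dual_basis {p : ℕ} (hp : p.Prime) (S : Type*) [CommRing S]
    [IsNoetherianRing S] [CharP S p] (hreg : IsRegularKunz p S) (hFFS : IsFFinite p S)
    (e : ℕ) (s₀ : S) :
    ∃ (T : Finset S) (θ : S → S → S), (∀ v ∈ T, IsCartierMap p e (θ v)) ∧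
      s₀ = ∑ v ∈ T, (θ v s₀) ^ p ^ e * v := by
  haveI := Fact.mk hp
  haveI : ExpChar S p := .prime hp
  letI : Algebra S (FrobAlg p e S) :=
    (iterateFrobenius S p e : S →+* FrobAlg p e S).toAlgebra
  have key : ∀ (r x : S), (r • (toFrob p e x) : FrobAlg p e S) = toFrob p e (r ^ p ^ e * x) :=
    fun r x => rfl
  -- Finiteness of `F^e_* S`.
  haveI hfin : Module.Finite S (FrobAlg p e S) := by
    obtain ⟨ι, hι, g, hg⟩ := hFFS.exists_gen hp e
    letI := hι
    refine ⟨(Submodule.fg_def).mpr ⟨Set.range (fun i => toFrob p e (g i)),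
      Set.finite_range _, ?_⟩⟩
    refine Submodule.eq_top_iff'.mpr fun x => ?_
    obtain ⟨c, hc⟩ := hg (ofFrob p e x)
    have hx : x = ∑ i, c i • toFrob p e (g i) := by
      show toFrob p e (ofFrob p e x) = _
      rw [show ofFrob p e x = ∑ i, c i ^ p ^ e * g i from hc]
      exact Finset.sum_congr rfl fun i _ => (key (c i) (g i)).symm
    rw [hx]
    exact Submodule.sum_mem _ fun i _ =>
      Submodule.smul_mem _ _ (Submodule.subset_span ⟨i, rfl⟩)
  -- Flatness of `F^e_* S`.
  haveI hflat : Module.Flat S (FrobAlg p e S) :=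
    (flat_iterateFrobenius hp S hreg e)
  -- Projectivity.
  haveI hfp : Module.FinitePresentation S (FrobAlg p e S) :=
    Module.finitePresentation_of_finite S (FrobAlg p e S)
  haveI hproj : Module.Projective S (FrobAlg p e S) := by
    rw [← Module.freeLocus_eq_univ_iff]
    exact Module.freeLocus_eq_univ
  obtain ⟨σ, hσ⟩ := (Module.projective_def).mp hproj
  have h0 : Finsupp.linearCombination S id (σ (toFrob p e s₀)) = toFrob p e s₀ :=
    hσ (toFrob p e s₀)
  rw [Finsupp.linearCombination_apply] at h0
  refine ⟨(σ (toFrob p e s₀)).support, fun v s => σ (toFrob p e s) v,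
    fun v _ => ⟨fun x y => ?_, fun r x => ?_⟩, ?_⟩
  · show σ (toFrob p e (x + y)) v = σ (toFrob p e x) v + σ (toFrob p e y) v
    rw [show toFrob p e (x + y) = toFrob p e x + toFrob p e y from rfl, map_add]
    rfl
  · show σ (toFrob p e (r ^ p ^ e * x)) v = r * σ (toFrob p e x) v
    rw [show toFrob p e (r ^ p ^ e * x) = r • toFrob p e x from (key r x).symm, map_smul]
    rfl
  · conv_lhs => rw [show s₀ = ofFrob p e (toFrob p e s₀) from rfl, ← h0]
    rfl

end KeyFact

section Crux

variable {p : ℕ} {S : Type*} [CommRing S] [CharP S p]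
  {R : Type*} [CommRing R] [Algebra R S]

/-- The central computation: for a Cartier map `φ` on `R` of level `e`, an ideal `I ⊆ R`,
and a Cartier map `θ` on `S` of level `e'`, the assignment
`z ↦ φ(β(θ(ι z)^{p^e}·b))` is a Cartier map of level `e'` on `R`; consequently its values on
`I^{⌈p^{e'}λ⌉}` lie in `τ_R(I^λ)`. -/
lemma aux_map_mem (hp : p.Prime) (β : S →ₗ[R] R) (I : Ideal R) (l : ℝ)
    {e : ℕ} {φ : R → R} (hφ : IsCartierMap p e φ) (e' : ℕ) :
    ∀ w ∈ Ideal.map (algebraMap R S) (I ^ ⌈(p : ℝ) ^ e' * l⌉₊),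
      ∀ (θ : S → S), IsCartierMap p e' θ → ∀ b : S,
        φ (β (θ w ^ p ^ e * b)) ∈ testIdeal p I l := by
  haveI := Fact.mk hp
  haveI : ExpChar S p := .prime hp
  let M : Submodule S S :=
    { carrier := {w | ∀ (θ : S → S), IsCartierMap p e' θ → ∀ b : S,
        φ (β (θ w ^ p ^ e * b)) ∈ testIdeal p I l}
      add_mem' := by
        intro x y hx hy θ hθ b
        show φ (β (θ (x + y) ^ p ^ e * b)) ∈ _
        rw [hθ.1, add_pow_expChar_pow, add_mul, map_add, hφ.1]
        exact add_mem (hx θ hθ b) (hy θ hθ b)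
      zero_mem' := by
        intro θ hθ b
        show φ (β (θ 0 ^ p ^ e * b)) ∈ _
        rw [hθ.map_zero', zero_pow (pow_ne_zero _ hp.ne_zero), zero_mul, map_zero,
          hφ.map_zero']
        exact zero_mem _
      smul_mem' := by
        intro s w hw θ hθ b
        show φ (β (θ (s * w) ^ p ^ e * b)) ∈ _
        exact hw (fun u => θ (s * u)) (hθ.comp_mul s) b }
  have hle : Ideal.map (algebraMap R S) (I ^ ⌈(p : ℝ) ^ e' * l⌉₊) ≤ M := by
    refine Ideal.map_le_iff_le_comap.mpr fun y hy => ?_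
    show ∀ (θ : S → S), IsCartierMap p e' θ → ∀ b : S,
      φ (β (θ (algebraMap R S y) ^ p ^ e * b)) ∈ testIdeal p I l
    intro θ hθ b
    have hρ : IsCartierMap p e'
        (fun z => φ (β (θ (algebraMap R S z) ^ p ^ e * b))) := by
      refine ⟨fun x y => ?_, fun r z => ?_⟩
      · show φ (β (θ (algebraMap R S (x + y)) ^ p ^ e * b)) =
          φ (β (θ (algebraMap R S x) ^ p ^ e * b)) +
            φ (β (θ (algebraMap R S y) ^ p ^ e * b))
        rw [map_add, hθ.1, add_pow_expChar_pow, add_mul, map_add, hφ.1]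
      · show φ (β (θ (algebraMap R S (r ^ p ^ e' * z)) ^ p ^ e * b)) =
          r * φ (β (θ (algebraMap R S z) ^ p ^ e * b))
        rw [show (algebraMap R S) (r ^ p ^ e' * z) =
            (algebraMap R S r) ^ p ^ e' * algebraMap R S z by rw [map_mul, map_pow],
          hθ.2, mul_pow, ← map_pow, mul_assoc, ← Algebra.smul_def,
          map_smul, smul_eq_mul, hφ.2]
    have hmem : (fun z => φ (β (θ (algebraMap R S z) ^ p ^ e * b))) y ∈
        cartierIdeal p e' (I ^ ⌈(p : ℝ) ^ e' * l⌉₊) :=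
      Ideal.subset_span ⟨_, hρ, y, hy, rfl⟩
    exact le_iSup (fun E => cartierIdeal p E (I ^ ⌈(p : ℝ) ^ E * l⌉₊)) e' hmem
  exact fun w hw => hle hw

/-- Transfer of test ideal membership along the splitting: if `c ∈ τ_S((IS)^λ)` then
`φ(β(c^{p^e}·b)) ∈ τ_R(I^λ)` for every Cartier map `φ` of level `e` on `R` and `b ∈ S`. -/
lemma crux (hp : p.Prime) (β : S →ₗ[R] R) (I : Ideal R) (l : ℝ)
    {e : ℕ} {φ : R → R} (hφ : IsCartierMap p e φ)
    {c : S} (hc : c ∈ testIdeal p (I.map (algebraMap R S)) l) (b : S) :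
    φ (β (c ^ p ^ e * b)) ∈ testIdeal p I l := by
  haveI := Fact.mk hp
  haveI : ExpChar S p := .prime hp
  let N : Submodule S S :=
    { carrier := {c | ∀ b : S, φ (β (c ^ p ^ e * b)) ∈ testIdeal p I l}
      add_mem' := by
        intro x y hx hy b
        show φ (β ((x + y) ^ p ^ e * b)) ∈ _
        rw [add_pow_expChar_pow, add_mul, map_add, hφ.1]
        exact add_mem (hx b) (hy b)
      zero_mem' := by
        intro b
        show φ (β ((0 : S) ^ p ^ e * b)) ∈ _
        rw [zero_pow (pow_ne_zero _ hp.ne_zero), zero_mul, map_zero, hφ.map_zero']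
        exact zero_mem _
      smul_mem' := by
        intro s c hcmem b
        show φ (β ((s * c) ^ p ^ e * b)) ∈ _
        have hrw : (s * c) ^ p ^ e * b = c ^ p ^ e * (s ^ p ^ e * b) := by
          rw [mul_pow]; ring
        rw [hrw]
        exact hcmem (s ^ p ^ e * b) }
  have hN : testIdeal p (I.map (algebraMap R S)) l ≤ N := by
    show (⨆ e' : ℕ, cartierIdeal p e'
      ((I.map (algebraMap R S)) ^ ⌈(p : ℝ) ^ e' * l⌉₊)) ≤ N
    refine iSup_le fun e' => ?_
    refine Ideal.span_le.mpr ?_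
    rintro _ ⟨θ, hθ, w, hw, rfl⟩
    intro b
    have hw' : w ∈ Ideal.map (algebraMap R S) (I ^ ⌈(p : ℝ) ^ e' * l⌉₊) := by
      rw [Ideal.map_pow]; exact hw
    exact aux_map_mem hp β I l hφ e' w hw' θ hθ b
  exact hN hc b

end Crux

/-- The main inequality: if the test ideals of the extended ideal agree, then the test
ideal downstairs at `l₁` is contained in the one at `l₂`. -/
lemma testIdeal_le_of_extension_eq
    (p : ℕ) (hp : p.Prime)
    (S : Type*) [CommRing S] [IsNoetherianRing S] [CharP S p]
    (hreg : IsRegularKunz p S) (hFFS : IsFFinite p S)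
    (R : Type*) [CommRing R] [Algebra R S]
    (β : S →ₗ[R] R) (hβ : ∀ r : R, β (algebraMap R S r) = r)
    (I : Ideal R) (l₁ l₂ : ℝ)
    (h : testIdeal p (I.map (algebraMap R S)) l₁ =
         testIdeal p (I.map (algebraMap R S)) l₂) :
    testIdeal p I l₁ ≤ testIdeal p I l₂ := by
  show (⨆ e : ℕ, cartierIdeal p e (I ^ ⌈(p : ℝ) ^ e * l₁⌉₊)) ≤ testIdeal p I l₂
  refine iSup_le fun e => ?_
  refine Ideal.span_le.mpr ?_
  rintro _ ⟨φ, hφ, x, hx, rfl⟩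
  obtain ⟨T, θ, hθ, hsum⟩ := exists_cartier_dual_basis hp S hreg hFFS e (algebraMap R S x)
  have hφx : φ x = ∑ v ∈ T, φ (β ((θ v (algebraMap R S x)) ^ p ^ e * v)) := by
    conv_lhs => rw [← hβ x, hsum]
    rw [map_sum]
    exact map_sum (AddMonoidHom.mk' φ hφ.1) _ T
  rw [hφx]
  refine Ideal.sum_mem _ fun v hv => ?_
  have hxm : algebraMap R S x ∈ (I.map (algebraMap R S)) ^ ⌈(p : ℝ) ^ e * l₁⌉₊ := by
    rw [← Ideal.map_pow]
    exact Ideal.mem_map_of_mem _ hx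
  have hc : θ v (algebraMap R S x) ∈ testIdeal p (I.map (algebraMap R S)) l₁ := by
    have hmem : θ v (algebraMap R S x) ∈ cartierIdeal p e
        ((I.map (algebraMap R S)) ^ ⌈(p : ℝ) ^ e * l₁⌉₊) :=
      Ideal.subset_span ⟨θ v, hθ v hv, _, hxm, rfl⟩
    exact le_iSup
      (fun E => cartierIdeal p E ((I.map (algebraMap R S)) ^ ⌈(p : ℝ) ^ E * l₁⌉₊)) e hmem
  rw [h] at hc
  exact crux hp β I l₂ hφ hc v

/-- Theorem `ThmEqTestIdeals`.  Let `S` be a regular `F`-finite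
domain of characteristic `p > 0` and `R ⊆ S` an `F`-finite Noetherian subring such that
the inclusion splits `R`-linearly.  Let `I ⊆ R` be an ideal and `λ₁, λ₂ > 0`.
If `τ_S((IS)^{λ₁}) = τ_S((IS)^{λ₂})`, then `τ_R(I^{λ₁}) = τ_R(I^{λ₂})`. -/
theorem testIdeal_eq_of_extension_eq
    (p : ℕ) (hp : p.Prime)
    (S : Type*) [CommRing S] [IsDomain S] [IsNoetherianRing S] [CharP S p]
    (hreg : IsRegularKunz p S) (hFFS : IsFFinite p S)
    (R : Type*) [CommRing R] [IsNoetherianRing R] [CharP R p] (hFFR : IsFFinite p R)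
    [Algebra R S] (hRS : Function.Injective (algebraMap R S))
    (β : S →ₗ[R] R) (hβ : ∀ r : R, β (algebraMap R S r) = r)
    (I : Ideal R) (l₁ l₂ : ℝ) (hl₁ : 0 < l₁) (hl₂ : 0 < l₂)
    (h : testIdeal p (I.map (algebraMap R S)) l₁ =
         testIdeal p (I.map (algebraMap R S)) l₂) :
    testIdeal p I l₁ = testIdeal p I l₂ :=
  le_antisymm
    (testIdeal_le_of_extension_eq p hp S hreg hFFS R β hβ I l₁ l₂ h)
    (testIdeal_le_of_extension_eq p hp S hreg hFFS R β hβ I l₂ l₁ h.symm)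
end

section
/- Let S = ℚ[x₁,…,xₙ], I ⊆ S an ideal, R = S/I, S_ℤ = ℤ[x₁,…,xₙ], J = I ∩ S_ℤ, R_ℤ = S_ℤ/J, and let f ∈ R_ℤ be nonzero. Suppose there exist δ(s) ∈ D_{R|ℚ}[s] and a nonzero b(s) ∈ ℚ[s] such that δ(t)·f^{t+1} = b(t)·f^t in R for every t ∈ ℕ (e.g., b(s) = b^R_f(s), which exists when R is a direct summand of a polynomial ring over ℚ). Then there exists m ∈ ℕ such that for every prime p > m for which R_p := R_ℤ/pR_ℤ is F-finite and F-pure, and for all ν, e ∈ ℕ with C^e_{R_p}(f̄^ν R_p) ≠ C^e_{R_p}(f̄^{ν+1} R_p) (f̄ being the image of f in R_p), one has b(ν) ≡ 0 mod p, i.e., the image in 𝔽_p of the rational number b(ν) (whose denominator is prime to p) is zero. -/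
section AuxDiffOp

variable {A R : Type*} [CommRing A] [CommRing R] [Algebra A R]

lemma isDiffOpOfOrder_zero_op {n : ℕ} : IsDiffOpOfOrder A n (0 : R →ₗ[A] R) := by
  induction n with
  | zero => exact ⟨0, fun x => by simp⟩
  | succ n ih =>
    intro r
    have h : (0 : R →ₗ[A] R) ∘ₗ LinearMap.mulLeft A r - LinearMap.mulLeft A r ∘ₗ 0
        = 0 := by ext x; simp
    rw [h]; exact ih

lemma IsDiffOpOfOrder.mono {n : ℕ} {δ : R →ₗ[A] R} (h : IsDiffOpOfOrder A n δ) :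
    IsDiffOpOfOrder A (n + 1) δ := by
  induction n generalizing δ with
  | zero =>
    obtain ⟨r, hr⟩ := h
    intro s
    refine ⟨0, fun x => ?_⟩
    simp [hr, LinearMap.mulLeft_apply]
    ring
  | succ n ih =>
    intro s
    exact ih (h s)

lemma IsDiffOpOfOrder.of_le {n k : ℕ} {δ : R →ₗ[A] R} (hnk : n ≤ k)
    (h : IsDiffOpOfOrder A n δ) : IsDiffOpOfOrder A k δ := by
  induction k with
  | zero => exact (Nat.le_zero.mp hnk) ▸ h
  | succ k ih =>
    rcases Nat.lt_or_ge n (k+1) with h1 | h1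
    · exact (ih (Nat.lt_succ_iff.mp h1)).mono
    · exact (Nat.le_antisymm hnk h1) ▸ h

lemma IsDiffOpOfOrder.add {n : ℕ} {δ₁ δ₂ : R →ₗ[A] R} (h₁ : IsDiffOpOfOrder A n δ₁)
    (h₂ : IsDiffOpOfOrder A n δ₂) : IsDiffOpOfOrder A n (δ₁ + δ₂) := by
  induction n generalizing δ₁ δ₂ with
  | zero =>
    obtain ⟨r₁, hr₁⟩ := h₁; obtain ⟨r₂, hr₂⟩ := h₂
    exact ⟨r₁ + r₂, fun x => by simp [hr₁ x, hr₂ x, add_mul]⟩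
  | succ n ih =>
    intro r
    have h : (δ₁ + δ₂) ∘ₗ LinearMap.mulLeft A r - LinearMap.mulLeft A r ∘ₗ (δ₁ + δ₂)
        = (δ₁ ∘ₗ LinearMap.mulLeft A r - LinearMap.mulLeft A r ∘ₗ δ₁)
          + (δ₂ ∘ₗ LinearMap.mulLeft A r - LinearMap.mulLeft A r ∘ₗ δ₂) := by
      ext x; simp; ring
    rw [h]
    exact ih (h₁ r) (h₂ r)

lemma IsDiffOpOfOrder.smul {n : ℕ} (c : A) {δ : R →ₗ[A] R} (h : IsDiffOpOfOrder A n δ) :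
    IsDiffOpOfOrder A n (c • δ) := by
  induction n generalizing δ with
  | zero =>
    obtain ⟨r, hr⟩ := h
    exact ⟨c • r, fun x => by simp [hr x, smul_mul_assoc]⟩
  | succ n ih =>
    intro r
    have h2 : (c • δ) ∘ₗ LinearMap.mulLeft A r - LinearMap.mulLeft A r ∘ₗ (c • δ)
        = c • (δ ∘ₗ LinearMap.mulLeft A r - LinearMap.mulLeft A r ∘ₗ δ) := by
      ext x; simp [smul_sub]
    rw [h2]
    exact ih (h r)

lemma IsDiffOpOfOrder.finsetSum {ι : Type*} {n : ℕ} {s : Finset ι} {f : ι → (R →ₗ[A] R)}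
    (h : ∀ i ∈ s, IsDiffOpOfOrder A n (f i)) :
    IsDiffOpOfOrder A n (∑ i ∈ s, f i) := by
  classical
  induction s using Finset.induction with
  | empty => simpa using (isDiffOpOfOrder_zero_op (A := A) (R := R) (n := n))
  | insert _ _ hx ih =>
    rw [Finset.sum_insert hx]
    exact (h _ (Finset.mem_insert_self _ _)).add
      (ih fun i hi => h i (Finset.mem_insert_of_mem hi))

end AuxDiffOp
section AuxAd

variable {A R : Type*} [CommRing A] [CommRing R] [Algebra A R]

/-- The operator `δ ↦ [δ, σ·]` on endomorphisms. -/
noncomputable def adMul (σ : R) : Module.End A (Module.End A R) :=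
  LinearMap.mulRight A (LinearMap.mulLeft A σ) - LinearMap.mulLeft A (LinearMap.mulLeft A σ)

lemma adMul_apply (σ : R) (δ : Module.End A R) :
    adMul (A := A) σ δ = δ ∘ₗ LinearMap.mulLeft A σ - LinearMap.mulLeft A σ ∘ₗ δ := by
  simp [adMul, LinearMap.sub_apply, LinearMap.mulRight_apply, LinearMap.mulLeft_apply,
    Module.End.mul_eq_comp]

lemma adMul_pow_vanish {k : ℕ} {δ : Module.End A R} (h : IsDiffOpOfOrder A k δ) (σ : R) :
    ((adMul (A := A) σ) ^ (k + 1)) δ = 0 := by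
  induction k generalizing δ with
  | zero =>
    obtain ⟨r, hr⟩ := h
    rw [pow_one, adMul_apply]
    ext x
    simp [hr, LinearMap.mulLeft_apply]
    ring
  | succ k ih =>
    rw [pow_succ, Module.End.mul_apply, adMul_apply]
    exact ih (h σ)

lemma adMul_pow_vanish_of_le {k j : ℕ} {δ : Module.End A R} (h : IsDiffOpOfOrder A k δ)
    (hj : k + 1 ≤ j) (σ : R) : ((adMul (A := A) σ) ^ j) δ = 0 := by
  obtain ⟨i, rfl⟩ := Nat.exists_eq_add_of_le hj
  rw [add_comm, pow_add, Module.End.mul_apply, adMul_pow_vanish h σ, map_zero]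

/-- Noncommutative binomial expansion for `δ ∘ (σ^P ·)`. -/
lemma mul_mulLeft_pow_expand (δ : Module.End A R) (σ : R) (P : ℕ) :
    δ * (LinearMap.mulLeft A σ) ^ P
      = ∑ k ∈ Finset.range (P + 1), P.choose k •
          ((LinearMap.mulLeft A σ) ^ (P - k) * (((adMul (A := A) σ) ^ k) δ)) := by
  set Λ := LinearMap.mulLeft A σ with hΛ
  set lam : Module.End A (Module.End A R) := LinearMap.mulLeft A Λ with hlam
  set rho : Module.End A (Module.End A R) := LinearMap.mulRight A Λ with hrho
  have hcomm : Commute lam rho := LinearMap.commute_mulLeft_right Λ Λ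
  have hc : Commute (rho - lam) lam := by
    have h := Commute.sub_left (R := Module.End A (Module.End A R)) hcomm.symm (Commute.refl lam)
    exact h
  have key : rho ^ P = ∑ k ∈ Finset.range (P + 1),
      (rho - lam) ^ k * lam ^ (P - k) * (P.choose k : Module.End A (Module.End A R)) := by
    have := hc.add_pow P
    rwa [sub_add_cancel rho lam] at this
  have lhs : (rho ^ P) δ = δ * Λ ^ P := by
    rw [LinearMap.pow_mulRight, LinearMap.mulRight_apply]
  rw [← lhs, key, LinearMap.sum_apply]
  refine Finset.sum_congr rfl (fun k hk => ?_)
  have swap : (rho - lam) ^ k * lam ^ (P - k) = lam ^ (P - k) * (rho - lam) ^ k :=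
    (hc.pow_pow k (P - k))
  rw [Module.End.mul_apply, Module.End.natCast_apply, Module.End.mul_apply, map_nsmul, map_nsmul]
  congr 1
  rw [show ((rho - lam) ^ k) ((lam ^ (P - k)) δ) = ((rho - lam) ^ k * lam ^ (P - k)) δ from rfl,
    swap]
  rw [show ((lam ^ (P - k) * (rho - lam) ^ k)) δ = (lam ^ (P - k)) (((rho - lam) ^ k) δ) from rfl]
  rw [hlam, LinearMap.pow_mulLeft, LinearMap.mulLeft_apply]
  rfl

/-- Evaluated version of the expansion. -/
lemma apply_pow_mul_expand (δ : Module.End A R) (σ y : R) (P : ℕ) :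
    δ (σ ^ P * y)
      = ∑ k ∈ Finset.range (P + 1), P.choose k •
          (σ ^ (P - k) * ((((adMul (A := A) σ) ^ k) δ) y)) := by
  have h := congrArg (fun (g : Module.End A R) => g y) (mul_mulLeft_pow_expand δ σ P)
  simp only [Module.End.mul_apply] at h
  rw [LinearMap.pow_mulLeft, LinearMap.mulLeft_apply] at h
  rw [h, LinearMap.sum_apply]
  refine Finset.sum_congr rfl (fun k hk => ?_)
  rw [LinearMap.smul_apply, Module.End.mul_apply, LinearMap.pow_mulLeft, LinearMap.mulLeft_apply]

end AuxAd
section AuxLattice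

open MvPolynomial

lemma rat_den_mul_self (a : ℚ) : (a.den : ℚ) * a = (a.num : ℚ) := by
  rw [mul_comm]; exact_mod_cast Rat.mul_den_eq_num a

/-- The canonical map `ℤ[x] → ℚ[x]/I`. -/
noncomputable def piMap (n : ℕ) (I : Ideal (MvPolynomial (Fin n) ℚ)) :
    MvPolynomial (Fin n) ℤ →+* MvPolynomial (Fin n) ℚ ⧸ I :=
  (Ideal.Quotient.mk I).comp (MvPolynomial.map (Int.castRingHom ℚ))

lemma mv_clear_denom {n : ℕ} (g : MvPolynomial (Fin n) ℚ) :
    ∃ N : ℕ, 0 < N ∧ ∃ u : MvPolynomial (Fin n) ℤ,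
      N • g = MvPolynomial.map (Int.castRingHom ℚ) u := by
  induction g using MvPolynomial.induction_on with
  | C a =>
    refine ⟨a.den, a.pos, C a.num, ?_⟩
    rw [MvPolynomial.map_C]
    rw [← map_nsmul (C : ℚ →+* MvPolynomial (Fin n) ℚ)]
    congr 1
    rw [nsmul_eq_mul, rat_den_mul_self]
    rfl
  | add p q hp hq =>
    obtain ⟨N₁, h₁, u₁, hu₁⟩ := hp
    obtain ⟨N₂, h₂, u₂, hu₂⟩ := hq
    refine ⟨N₁ * N₂, Nat.mul_pos h₁ h₂, N₂ • u₁ + N₁ • u₂, ?_⟩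
    rw [smul_add, map_add, map_nsmul, map_nsmul, ← hu₁, ← hu₂, mul_smul, mul_comm N₁ N₂,
      mul_smul, smul_comm N₂ N₁ q, smul_comm N₂ N₁ p]
  | mul_X p i hp =>
    obtain ⟨N, hN, u, hu⟩ := hp
    refine ⟨N, hN, u * X i, ?_⟩
    rw [map_mul, MvPolynomial.map_X, ← hu, smul_mul_assoc]

lemma clear_denom_quot {n : ℕ} (I : Ideal (MvPolynomial (Fin n) ℚ))
    (c : MvPolynomial (Fin n) ℚ ⧸ I) :
    ∃ N : ℕ, 0 < N ∧ ∃ u, N • c = piMap n I u := by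
  obtain ⟨g, rfl⟩ := Ideal.Quotient.mk_surjective c
  obtain ⟨N, hN, u, hu⟩ := mv_clear_denom g
  exact ⟨N, hN, u, by rw [← map_nsmul (Ideal.Quotient.mk I), hu]; rfl⟩

set_option maxHeartbeats 1000000 in
set_option synthInstance.maxHeartbeats 400000 in
lemma lattice_exists {n : ℕ} (I : Ideal (MvPolynomial (Fin n) ℚ)) (k : ℕ)
    (δ : (MvPolynomial (Fin n) ℚ ⧸ I) →ₗ[ℚ] (MvPolynomial (Fin n) ℚ ⧸ I))
    (hδ : IsDiffOpOfOrder ℚ k δ) :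
    ∃ N : ℕ, 0 < N ∧ ∀ z : MvPolynomial (Fin n) ℤ, ∃ w, N • δ (piMap n I z) = piMap n I w := by
  induction k generalizing δ with
  | zero =>
    obtain ⟨r, hr⟩ := hδ
    obtain ⟨N, hN, u, hu⟩ := clear_denom_quot I r
    refine ⟨N, hN, fun z => ⟨u * z, ?_⟩⟩
    rw [hr, map_mul, ← hu, nsmul_eq_mul, nsmul_eq_mul, mul_assoc]
  | succ k ih =>
    obtain ⟨N₀, hN₀, u₀, hu₀⟩ := clear_denom_quot I (δ 1)
    choose Ni hNi wi hwi using fun i : Fin n =>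
      ih (δ ∘ₗ LinearMap.mulLeft ℚ (piMap n I (X i))
          - LinearMap.mulLeft ℚ (piMap n I (X i)) ∘ₗ δ) (hδ (piMap n I (X i)))
    refine ⟨N₀ * ∏ i, Ni i, Nat.mul_pos hN₀ (Finset.prod_pos (fun i _ => hNi i)), fun z => ?_⟩
    induction z using MvPolynomial.induction_on with
    | C a =>
      refine ⟨a • ((∏ i, Ni i) • u₀), ?_⟩
      have hca : (C a : MvPolynomial (Fin n) ℤ) = ((a : ℤ) : MvPolynomial (Fin n) ℤ) := by simp
      have h1 : (piMap n I) (C a) = (a : ℤ) • (1 : MvPolynomial (Fin n) ℚ ⧸ I) := by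
        rw [hca, map_intCast, zsmul_eq_mul, mul_one]
      rw [h1, map_zsmul, map_zsmul, smul_comm]
      congr 1
      rw [mul_comm N₀, mul_smul, hu₀, map_nsmul]
    | add p q hp hq =>
      obtain ⟨w₁, hw₁⟩ := hp
      obtain ⟨w₂, hw₂⟩ := hq
      exact ⟨w₁ + w₂, by rw [map_add, map_add, smul_add, hw₁, hw₂, map_add]⟩
    | mul_X p i hp =>
      obtain ⟨w, hw⟩ := hp
      set Di := δ ∘ₗ LinearMap.mulLeft ℚ (piMap n I (X i))
          - LinearMap.mulLeft ℚ (piMap n I (X i)) ∘ₗ δ with hDi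
      have split : δ (piMap n I (p * X i))
          = Di (piMap n I p) + piMap n I (X i) * δ (piMap n I p) := by
        rw [hDi]
        simp only [LinearMap.sub_apply, LinearMap.comp_apply, LinearMap.mulLeft_apply]
        rw [map_mul, mul_comm]
        ring
      refine ⟨(N₀ * ∏ j ∈ Finset.univ.erase i, Ni j) • wi i p + X i * w, ?_⟩
      rw [split, smul_add, map_add, map_nsmul, map_mul]
      congr 1
      · have hfac : N₀ * ∏ j, Ni j = (N₀ * ∏ j ∈ Finset.univ.erase i, Ni j) * Ni i := by
          rw [mul_assoc, mul_comm _ (Ni i),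
            Finset.mul_prod_erase Finset.univ Ni (Finset.mem_univ i)]
        rw [hfac, mul_smul, hwi i p]
      · rw [← hw, mul_smul_comm]

end AuxLattice
section AuxSpread

open MvPolynomial

lemma ad_lattice {n : ℕ} (I : Ideal (MvPolynomial (Fin n) ℚ)) {N : ℕ}
    (s : MvPolynomial (Fin n) ℤ) (k : ℕ) :
    ∀ (δ : Module.End ℚ (MvPolynomial (Fin n) ℚ ⧸ I)),
      (∀ z, ∃ w, N • δ (piMap n I z) = piMap n I w) →
      ∀ z, ∃ w, N • (((adMul (A := ℚ) (piMap n I s)) ^ k) δ) (piMap n I z) = piMap n I w := by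
  induction k with
  | zero => intro δ hN z; simpa using hN z
  | succ k ih =>
    intro δ hN z
    have hstep : ∀ z', ∃ w', N • ((adMul (A := ℚ) (piMap n I s)) δ) (piMap n I z')
        = piMap n I w' := by
      intro z'
      obtain ⟨w₁, hw₁⟩ := hN (s * z')
      obtain ⟨w₂, hw₂⟩ := hN z'
      refine ⟨w₁ - s * w₂, ?_⟩
      rw [adMul_apply]
      simp only [LinearMap.sub_apply, LinearMap.comp_apply, LinearMap.mulLeft_apply]
      rw [smul_sub, map_sub, ← map_mul (piMap n I), hw₁, map_mul, ← mul_smul_comm, hw₂]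
    have h2 := ih ((adMul (A := ℚ) (piMap n I s)) δ) hstep z
    rwa [← Module.End.mul_apply, ← pow_succ] at h2

set_option maxHeartbeats 1000000 in
lemma spread {n : ℕ} (I : Ideal (MvPolynomial (Fin n) ℚ)) {n₀ N : ℕ}
    (δ : Module.End ℚ (MvPolynomial (Fin n) ℚ ⧸ I)) (hδ : IsDiffOpOfOrder ℚ n₀ δ)
    (hN : ∀ z, ∃ w, N • δ (piMap n I z) = piMap n I w)
    {q : ℕ} (hq : q.Prime) (hqn : n₀ < q) (e : ℕ) (he : 1 ≤ e)
    (s z w : MvPolynomial (Fin n) ℤ) (hw : N • δ (piMap n I z) = piMap n I w) :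
    ∃ w', N • δ (piMap n I (s ^ q ^ e * z))
      = piMap n I (s ^ q ^ e * w + q • w') := by
  set P := q ^ e with hPdef
  have hPn : n₀ < P := lt_of_lt_of_le hqn (Nat.le_self_pow (by omega) q)
  set σ := piMap n I s with hσ
  have hπ : piMap n I (s ^ P * z) = σ ^ P * piMap n I z := by
    rw [map_mul, map_pow]
  have expand := apply_pow_mul_expand δ σ (piMap n I z) P
  -- handle the terms k = i+1 ≥ 1
  have hterm : ∀ i : ℕ, ∃ w', N • (P.choose (i+1) •
      (σ ^ (P - (i+1)) * ((((adMul (A := ℚ) σ) ^ (i+1)) δ) (piMap n I z))))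
        = piMap n I (q • w') := by
    intro i
    by_cases hbig : n₀ + 1 ≤ i + 1
    · refine ⟨0, ?_⟩
      rw [adMul_pow_vanish_of_le hδ hbig, LinearMap.zero_apply, mul_zero, smul_zero,
        smul_zero, smul_zero, map_zero]
    · push_neg at hbig
      have hk1 : i + 1 ≠ 0 := Nat.succ_ne_zero i
      have hk2 : i + 1 ≠ P := by omega
      obtain ⟨c, hc⟩ := Nat.Prime.dvd_choose_pow hq hk1 hk2
      obtain ⟨wk, hwk⟩ := ad_lattice I s (i+1) δ hN z
      rw [← hσ] at hwk
      refine ⟨c • (s ^ (P - (i+1)) * wk), ?_⟩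
      rw [smul_comm, ← mul_smul_comm, hwk, hσ, ← map_pow, ← map_mul, hc, mul_smul,
        ← map_nsmul, ← map_nsmul]
  choose w' hw' using hterm
  refine ⟨∑ i ∈ Finset.range P, w' i, ?_⟩
  rw [hπ, expand, Finset.sum_range_succ', smul_add]
  have hzero : N • (P.choose 0 • (σ ^ (P - 0) * ((((adMul (A := ℚ) σ) ^ 0) δ) (piMap n I z))))
      = piMap n I (s ^ P * w) := by
    rw [Nat.choose_zero_right, one_smul, Nat.sub_zero, pow_zero, Module.End.one_apply,
      ← mul_smul_comm, hw, ← map_pow, ← map_mul]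
  rw [hzero, Finset.smul_sum]
  rw [map_add]
  rw [add_comm (piMap n I (s ^ P * w))]
  congr 1
  rw [Finset.sum_congr rfl (fun i _ => hw' i), ← map_sum, ← Finset.smul_sum, map_nsmul]

lemma poly_denom (b : Polynomial ℚ) :
    ∃ Δ : ℕ, 0 < Δ ∧ ∀ t : ℕ, ∃ B : ℤ, (B : ℚ) = (Δ : ℚ) * b.eval (t : ℚ) := by
  refine ⟨∏ i ∈ b.support, (b.coeff i).den,
    Finset.prod_pos (fun i _ => (b.coeff i).pos), fun t => ?_⟩
  set Δ := ∏ i ∈ b.support, (b.coeff i).den with hΔ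
  have heval : b.eval (t : ℚ) = ∑ i ∈ b.support, b.coeff i * (t : ℚ) ^ i := by
    rw [Polynomial.eval_eq_sum, Polynomial.sum_def]
  have key : ∀ i : ℕ, ∃ Bi : ℤ, i ∈ b.support →
      (Bi : ℚ) = (Δ : ℚ) * (b.coeff i * (t : ℚ) ^ i) := by
    intro i
    by_cases hi : i ∈ b.support
    · obtain ⟨c, hc⟩ : ((b.coeff i).den ∣ Δ) := Finset.dvd_prod_of_mem _ hi
      refine ⟨(c : ℤ) * (b.coeff i).num * (t : ℤ) ^ i, fun _ => ?_⟩
      push_cast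
      rw [← rat_den_mul_self (b.coeff i), hc]
      push_cast
      ring
    · exact ⟨0, fun h => absurd h hi⟩
  choose Bi hBi using key
  refine ⟨∑ i ∈ b.support, Bi i, ?_⟩
  rw [heval, Finset.mul_sum]
  push_cast
  exact Finset.sum_congr rfl (fun i hi => hBi i hi)

end AuxSpread
lemma exists_sum_pi {n : ℕ} (I : Ideal (MvPolynomial (Fin n) ℚ)) {ι : Type*}
    (s : Finset ι) (g : ι → MvPolynomial (Fin n) ℚ ⧸ I)
    (h : ∀ i ∈ s, ∃ u, g i = piMap n I u) :
    ∃ u, ∑ i ∈ s, g i = piMap n I u := by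
  classical
  induction s using Finset.induction with
  | empty => exact ⟨0, by simp⟩
  | @insert a s ha ih =>
    obtain ⟨u₁, hu₁⟩ := h a (Finset.mem_insert_self a s)
    obtain ⟨u₂, hu₂⟩ := ih (fun i hi => h i (Finset.mem_insert_of_mem hi))
    exact ⟨u₁ + u₂, by rw [Finset.sum_insert ha, hu₁, hu₂, map_add]⟩
set_option maxHeartbeats 4000000 in
set_option synthInstance.maxHeartbeats 1000000 in
/-- Theorem `ThmBSFjumps`.  Let `S = ℚ[x₁,…,xₙ]`, `I ⊆ S`,
`R = S/I`, `S_ℤ = ℤ[x₁,…,xₙ]`, `J = I ∩ S_ℤ`, `R_ℤ = S_ℤ/J`, and let `f ∈ R_ℤ` be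
nonzero.  Suppose `δ(s) ∈ D_{R|ℚ}[s]` and `0 ≠ b(s) ∈ ℚ[s]` satisfy
`δ(t)·f^{t+1} = b(t)·f^t` in `R` for all `t ∈ ℕ`.  Then there is `m₀ ∈ ℕ` such that for
every prime `q > m₀` for which `R_q = R_ℤ/qR_ℤ` is `F`-finite and `F`-pure, and all
`ν` and `e ≥ 1` with `C^e_{R_q}(f̄^ν) ≠ C^e_{R_q}(f̄^{ν+1})`, the rational number
`b(ν)` has denominator prime to `q` and numerator divisible by `q`, i.e.
`b(ν) ≡ 0 mod q`. -/
theorem bernsteinSato_roots_mod_p_of_fJumps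
    (n : ℕ) (I : Ideal (MvPolynomial (Fin n) ℚ))
    (f : MvPolynomial (Fin n) ℤ ⧸ (I.comap (MvPolynomial.map (Int.castRingHom ℚ))))
    (hf : f ≠ 0)
    (m : ℕ)
    (d : ℕ → ((MvPolynomial (Fin n) ℚ ⧸ I) →ₗ[ℚ] (MvPolynomial (Fin n) ℚ ⧸ I)))
    (hd : ∀ j, IsDiffOp ℚ (d j))
    (b : Polynomial ℚ) (hb : b ≠ 0)
    (heq : ∀ t : ℕ,
      (∑ j ∈ Finset.range (m + 1), ((t : ℚ) ^ j) • d j)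
          ((Ideal.quotientMap I (MvPolynomial.map (Int.castRingHom ℚ)) le_rfl f) ^ (t + 1)) =
        Polynomial.eval (t : ℚ) b •
          (Ideal.quotientMap I (MvPolynomial.map (Int.castRingHom ℚ)) le_rfl f) ^ t) :
    ∃ m₀ : ℕ, ∀ q : ℕ, q.Prime → m₀ < q →
      IsFFinite q ((MvPolynomial (Fin n) ℤ ⧸
          (I.comap (MvPolynomial.map (Int.castRingHom ℚ)))) ⧸
          (Ideal.span {(q : MvPolynomial (Fin n) ℤ ⧸
            (I.comap (MvPolynomial.map (Int.castRingHom ℚ))))})) →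
      IsFPure q ((MvPolynomial (Fin n) ℤ ⧸
          (I.comap (MvPolynomial.map (Int.castRingHom ℚ)))) ⧸
          (Ideal.span {(q : MvPolynomial (Fin n) ℤ ⧸
            (I.comap (MvPolynomial.map (Int.castRingHom ℚ))))})) →
      ∀ ν e : ℕ, 1 ≤ e →
        cartierIdeal q e (Ideal.span {(Ideal.Quotient.mk (Ideal.span {(q : MvPolynomial (Fin n) ℤ ⧸
            (I.comap (MvPolynomial.map (Int.castRingHom ℚ))))}) f) ^ ν}) ≠
          cartierIdeal q e (Ideal.span {(Ideal.Quotient.mk (Ideal.span {(q : MvPolynomial (Fin n) ℤ ⧸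
            (I.comap (MvPolynomial.map (Int.castRingHom ℚ))))}) f) ^ (ν + 1)}) →
        ((((b.eval (ν : ℚ)).num : ZMod q) = 0) ∧
          ((((b.eval (ν : ℚ)).den : ℕ) : ZMod q) ≠ 0)) := by

  classical
  -- basic abbreviations
  obtain ⟨Δ, hΔpos, hB⟩ := poly_denom b
  have hdord : ∀ j : ℕ, IsDiffOpOfOrder ℚ (hd j).choose (d j) := fun j => (hd j).choose_spec
  set n₀ := (Finset.range (m+1)).sup (fun j => (hd j).choose) with hn₀
  choose Nj hNjpos wj hwj using fun j : ℕ => lattice_exists I _ (d j) (hdord j)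
  set Np := ∏ j ∈ Finset.range (m+1), Nj j with hNp
  have hNppos : 0 < Np := Finset.prod_pos (fun j _ => hNjpos j)
  set N := Δ * Np with hN
  have hNpos : 0 < N := Nat.mul_pos hΔpos hNppos
  refine ⟨N + n₀, fun q hq hql hFF hFP ν e he hCart => ?_⟩
  haveI : Fact q.Prime := ⟨hq⟩
  -- the operator δν and its order bound
  set δν : (MvPolynomial (Fin n) ℚ ⧸ I) →ₗ[ℚ] (MvPolynomial (Fin n) ℚ ⧸ I)
    := ∑ j ∈ Finset.range (m+1), ((ν:ℚ)^j) • d j with hδν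
  have hOrd : IsDiffOpOfOrder ℚ n₀ δν := by
    refine IsDiffOpOfOrder.finsetSum (fun j hj => IsDiffOpOfOrder.smul _ ?_)
    exact IsDiffOpOfOrder.of_le (Finset.le_sup hj) (hdord j)
  -- uniform lattice bound for δν
  have hNlat : ∀ z : MvPolynomial (Fin n) ℤ, ∃ w, N • δν (piMap n I z) = piMap n I w := by
    intro z
    have hsum : δν (piMap n I z)
        = ∑ j ∈ Finset.range (m+1), ((ν:ℚ)^j • (d j) (piMap n I z)) := by
      rw [hδν, LinearMap.sum_apply]
      exact Finset.sum_congr rfl (fun j _ => LinearMap.smul_apply _ _ _)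
    have hterm : ∀ j ∈ Finset.range (m+1), ∃ u,
        N • ((ν:ℚ)^j • (d j) (piMap n I z)) = piMap n I u := by
      intro j hj
      have hfac : N = (Δ * ∏ k ∈ (Finset.range (m+1)).erase j, Nj k) * Nj j := by
        rw [hN, hNp, mul_assoc, mul_comm _ (Nj j), Finset.mul_prod_erase _ Nj hj]
      refine ⟨(ν^j : ℤ) • ((Δ * ∏ k ∈ (Finset.range (m+1)).erase j, Nj k) • wj j z), ?_⟩
      rw [smul_comm, hfac, mul_smul, hwj j z, map_zsmul, map_nsmul]
      rw [show ((ν:ℚ))^j = (((ν^j : ℤ)) : ℚ) by push_cast; ring, Int.cast_smul_eq_zsmul]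
    obtain ⟨u, hu⟩ := exists_sum_pi I (Finset.range (m+1)) _ hterm
    refine ⟨u, ?_⟩
    rw [hsum, Finset.smul_sum, ← hu]
  -- arithmetic of q
  have hqN : ¬ (q ∣ N) := fun hdvd => absurd (Nat.le_of_dvd hNpos hdvd) (by omega)
  have hqn₀ : n₀ < q := by omega
  have hNZ : ((N : ℕ) : ZMod q) ≠ 0 := by
    rw [Ne, ZMod.natCast_eq_zero_iff]; exact hqN
  -- the integer Bν with (Bν : ℚ) = N * b.eval ν
  obtain ⟨B0, hB0⟩ := hB ν
  set Bν : ℤ := (Np : ℤ) * B0 with hBν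
  have hBNQ : (Bν : ℚ) = (N : ℚ) * b.eval (ν : ℚ) := by
    rw [hBν, hN]; push_cast; rw [hB0]; ring
  have hNQne : (N : ℚ) ≠ 0 := Nat.cast_ne_zero.mpr hNpos.ne'
  have hden : ((b.eval (ν : ℚ)).den : ℤ) ∣ (N : ℤ) := by
    have heval : b.eval (ν:ℚ) = Rat.divInt Bν (N:ℤ) := by
      rw [Rat.divInt_eq_div]
      push_cast
      rw [hBNQ, mul_comm, mul_div_assoc, div_self hNQne, mul_one]
    rw [heval]
    exact Rat.den_dvd Bν (N:ℤ)
  have hdenZ : (((b.eval (ν : ℚ)).den : ℕ) : ZMod q) ≠ 0 := by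
    rw [Ne, ZMod.natCast_eq_zero_iff]
    intro hdvd
    exact hqN (Int.ofNat_dvd.mp (dvd_trans (Int.ofNat_dvd.mpr hdvd) hden))
  refine ⟨?_, hdenZ⟩
  by_contra hnum
  -- the integer identity Bν * den = N * num and its consequences mod q
  have hid : Bν * ((b.eval (ν : ℚ)).den : ℤ) = (N : ℤ) * (b.eval (ν : ℚ)).num := by
    have h1 : ((Bν * ((b.eval (ν : ℚ)).den : ℤ) : ℤ) : ℚ)
        = (((N : ℤ) * (b.eval (ν : ℚ)).num : ℤ) : ℚ) := by
      push_cast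
      rw [hBNQ, mul_assoc]
      congr 1
      exact_mod_cast Rat.mul_den_eq_num (b.eval (ν:ℚ))
    exact_mod_cast h1
  have hBZ : ((Bν : ℤ) : ZMod q) ≠ 0 := by
    intro h0
    have h2 : ((Bν * ((b.eval (ν : ℚ)).den : ℤ) : ℤ) : ZMod q)
        = (((N : ℤ) * (b.eval (ν : ℚ)).num : ZMod q)) := by rw [hid]; push_cast; ring
    push_cast at h2
    rw [h0, zero_mul] at h2
    rcases mul_eq_zero.mp h2.symm with h | h
    · exact hNZ h
    · exact hnum h
  obtain ⟨Cc, kk, hCck⟩ : ∃ (Cc kk : ℤ), Cc * Bν - 1 = q * kk := by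
    set u := ((Bν : ZMod q))⁻¹ with hu
    refine ⟨(u.val : ℤ), ?_⟩
    have hcast : ((u.val : ℤ) : ZMod q) = u := by
      rw [Int.cast_natCast, ZMod.natCast_val, ZMod.cast_id]
    have h1 : (((u.val : ℤ) * Bν - 1 : ℤ) : ZMod q) = 0 := by
      rw [Int.cast_sub, Int.cast_mul, hcast, Int.cast_one, hu, inv_mul_cancel₀ hBZ, sub_self]
    obtain ⟨kk, hkk⟩ := (ZMod.intCast_zmod_eq_zero_iff_dvd _ q).mp h1
    exact ⟨kk, hkk⟩
  -- ===== char p construction =====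
  set qI := Ideal.span {(q : MvPolynomial (Fin n) ℤ ⧸
      (I.comap (MvPolynomial.map (Int.castRingHom ℚ))))} with hqI
  set mkq := Ideal.Quotient.mk qI with hmkq
  set mkJ := Ideal.Quotient.mk (I.comap (MvPolynomial.map (Int.castRingHom ℚ))) with hmkJ
  set κ := mkq.comp mkJ with hκ
  have hκs : Function.Surjective κ := by
    rw [hκ, RingHom.coe_comp]
    exact Function.Surjective.comp Ideal.Quotient.mk_surjective Ideal.Quotient.mk_surjective
  have hπκ : ∀ x y : MvPolynomial (Fin n) ℤ, piMap n I x = piMap n I y → κ x = κ y := by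
    intro x y hxy
    have h1 : MvPolynomial.map (Int.castRingHom ℚ) x - MvPolynomial.map (Int.castRingHom ℚ) y ∈ I :=
      Ideal.Quotient.eq.mp hxy
    have h2 : x - y ∈ I.comap (MvPolynomial.map (Int.castRingHom ℚ)) := by
      rw [Ideal.mem_comap, map_sub]; exact h1
    have h3 : mkJ x = mkJ y := Ideal.Quotient.eq.mpr h2
    rw [hκ, RingHom.comp_apply, RingHom.comp_apply, h3]
  have hq0 : ((q : ℕ) : (MvPolynomial (Fin n) ℤ ⧸
      (I.comap (MvPolynomial.map (Int.castRingHom ℚ)))) ⧸ qI) = 0 := by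
    rw [← map_natCast mkq q]
    exact Ideal.Quotient.eq_zero_iff_mem.mpr (Ideal.subset_span rfl)
  have hqsmul : ∀ y : (MvPolynomial (Fin n) ℤ ⧸
      (I.comap (MvPolynomial.map (Int.castRingHom ℚ)))) ⧸ qI, (q : ℕ) • y = 0 := by
    intro y
    have h' : (q : ℕ) • y = (q : _) * y := nsmul_eq_mul q y
    rw [h', hq0]
    exact zero_mul y
  -- lift of f
  obtain ⟨F, hF⟩ := Ideal.Quotient.mk_surjective f
  have hπF : Ideal.quotientMap I (MvPolynomial.map (Int.castRingHom ℚ)) le_rfl f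
      = piMap n I F := by
    rw [← hF]
    exact Ideal.quotientMap_mk
  have hκF : mkq f = κ F := by rw [← hF]; rfl
  -- the choice function D
  choose Dp hDp using hNlat
  have hWD : ∀ z z', κ z = κ z' → κ (Dp z) = κ (Dp z') := by
    intro z z' hzz
    have h1 : mkJ (z - z') ∈ qI := by
      have h0 : κ (z - z') = 0 := by rw [map_sub, hzz, sub_self]
      exact Ideal.Quotient.eq_zero_iff_mem.mp h0
    obtain ⟨c, hc⟩ := Ideal.mem_span_singleton'.mp (hqI ▸ h1)
    obtain ⟨c', hc'⟩ := Ideal.Quotient.mk_surjective c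
    have h2 : mkJ (z - (z' + q • c')) = 0 := by
      have hqc : mkJ (z - z') = q • mkJ c' := by
        rw [← hc, ← hc', nsmul_eq_mul, mul_comm]
      rw [sub_add_eq_sub_sub, map_sub, hqc, map_nsmul, sub_self]
    have h3 : piMap n I (z - (z' + q • c')) = 0 := by
      have hu := Ideal.Quotient.eq_zero_iff_mem.mp h2
      exact Ideal.Quotient.eq_zero_iff_mem.mpr (Ideal.mem_comap.mp hu)
    have h4 : piMap n I z = piMap n I (z' + q • c') := by
      rw [← sub_eq_zero, ← map_sub]; exact h3
    have h5 : piMap n I (Dp z) = piMap n I (Dp z' + q • Dp c') := by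
      rw [← hDp, h4, map_add, map_nsmul, map_add, map_nsmul, smul_add, hDp,
        smul_comm N q, hDp, map_add, map_nsmul]
    have h6 := hπκ _ _ h5
    rw [h6, map_add, map_nsmul, hqsmul, add_zero]
  set l := Function.surjInv hκs with hldef
  have hl : ∀ x, κ (l x) = x := fun x => Function.surjInv_eq hκs x
  set ξ : ((MvPolynomial (Fin n) ℤ ⧸ (I.comap (MvPolynomial.map (Int.castRingHom ℚ)))) ⧸ qI)
      → ((MvPolynomial (Fin n) ℤ ⧸ (I.comap (MvPolynomial.map (Int.castRingHom ℚ)))) ⧸ qI)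
    := fun x => κ (Dp (l x)) with hξdef
  -- ξ is additive
  have hξadd : ∀ x y, ξ (x + y) = ξ x + ξ y := by
    intro x y
    have h1 : κ (l (x + y)) = κ (l x + l y) := by rw [hl, map_add, hl, hl]
    have h3 : piMap n I (Dp (l x + l y)) = piMap n I (Dp (l x) + Dp (l y)) := by
      rw [← hDp, map_add, map_add, smul_add, hDp, hDp, map_add]
    calc ξ (x + y) = κ (Dp (l (x + y))) := rfl
      _ = κ (Dp (l x + l y)) := hWD _ _ h1
      _ = κ (Dp (l x) + Dp (l y)) := hπκ _ _ h3
      _ = ξ x + ξ y := by rw [map_add]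
  -- ξ is p^e-linear
  have hξsl : ∀ r x, ξ (r ^ q ^ e * x) = r ^ q ^ e * ξ x := by
    intro r x
    have h1 : κ (l (r ^ q ^ e * x)) = κ ((l r) ^ q ^ e * l x) := by
      rw [hl, map_mul, map_pow, hl, hl]
    obtain ⟨w', hw'⟩ := spread I δν hOrd (fun z => ⟨Dp z, hDp z⟩) hq hqn₀ e he (l r) (l x) (Dp (l x)) (hDp (l x))
    have h3 : piMap n I (Dp ((l r) ^ q ^ e * l x))
        = piMap n I ((l r) ^ q ^ e * Dp (l x) + q • w') := by
      rw [← hDp]; exact hw'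
    calc ξ (r ^ q ^ e * x) = κ (Dp (l (r ^ q ^ e * x))) := rfl
      _ = κ (Dp ((l r) ^ q ^ e * l x)) := hWD _ _ h1
      _ = κ ((l r) ^ q ^ e * Dp (l x) + q • w') := hπκ _ _ h3
      _ = r ^ q ^ e * ξ x := by
          rw [map_add, map_nsmul, hqsmul, add_zero, map_mul, map_pow, hl]
  -- the functional equation for ξ
  have hξrel : ξ ((mkq f) ^ (ν + 1)) = Bν • (mkq f) ^ ν := by
    have h1 : κ (l ((mkq f) ^ (ν + 1))) = κ (F ^ (ν + 1)) := by
      rw [hl, map_pow, ← hκF]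
    have h3 : piMap n I (Dp (F ^ (ν + 1))) = piMap n I (Bν • F ^ ν) := by
      rw [← hDp, map_pow, ← hπF]
      rw [hδν, heq ν, map_zsmul, map_pow, ← hπF]
      rw [← Nat.cast_smul_eq_nsmul ℚ, smul_smul, ← hBNQ, Int.cast_smul_eq_zsmul]
    calc ξ ((mkq f) ^ (ν + 1)) = κ (Dp (l ((mkq f) ^ (ν + 1)))) := rfl
      _ = κ (Dp (F ^ (ν + 1))) := hWD _ _ h1
      _ = κ (Bν • F ^ ν) := hπκ _ _ h3
      _ = Bν • (mkq f) ^ ν := by rw [map_zsmul, map_pow, hκF]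
  -- ===== conclusion: the two Cartier ideals agree =====
  apply hCart
  apply le_antisymm
  · -- C^e(f^ν) ≤ C^e(f^(ν+1))
    unfold cartierIdeal
    rw [Ideal.span_le]
    rintro y ⟨φ, hφ, x, hx, rfl⟩
    obtain ⟨c, hc⟩ := Ideal.mem_span_singleton'.mp hx
    have hφz : ∀ (a : ℤ) (v), φ (a • v) = a • φ v := fun a v =>
      map_zsmul (AddMonoidHom.mk' φ (fun s t => hφ.1 s t)) a v
    have hmem : Bν • φ x ∈ Ideal.span {y | ∃ ψ, IsCartierMap q e ψ ∧
        ∃ x ∈ Ideal.span {(mkq f) ^ (ν+1)}, y = ψ x} := by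
      have hψc : IsCartierMap q e (fun y => φ (c * ξ y)) := by
        constructor
        · intro s t
          show φ (c * ξ (s + t)) = φ (c * ξ s) + φ (c * ξ t)
          rw [hξadd, mul_add, hφ.1]
        · intro r s
          show φ (c * ξ (r ^ q ^ e * s)) = r * φ (c * ξ s)
          rw [hξsl, show c * (r ^ q ^ e * ξ s) = r ^ q ^ e * (c * ξ s) by ring, hφ.2]
      have hval : (fun y => φ (c * ξ y)) ((mkq f) ^ (ν+1)) = Bν • φ x := by
        show φ (c * ξ ((mkq f) ^ (ν+1))) = Bν • φ x
        rw [hξrel, mul_smul_comm, hc, ← hφz]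
      rw [← hval]
      exact Ideal.subset_span ⟨_, hψc, (mkq f) ^ (ν+1), Ideal.subset_span rfl, rfl⟩
    have hy : φ x = Cc • (Bν • φ x) := by
      have h0 : ((q : ℤ) • (kk • φ x)) = 0 := by
        rw [smul_comm, natCast_zsmul, hqsmul, smul_zero]
      rw [smul_smul, show Cc * Bν = 1 + q * kk by linarith [hCck], add_smul, one_smul,
        mul_smul, h0, add_zero]
    rw [hy, show Cc • (Bν • φ x) = (Cc : _) * (Bν • φ x) from zsmul_eq_mul (Bν • φ x) Cc]
    exact Ideal.mul_mem_left _ _ hmem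
  · -- C^e(f^(ν+1)) ≤ C^e(f^ν)
    unfold cartierIdeal
    rw [Ideal.span_le]
    rintro y ⟨φ, hφ, x, hx, rfl⟩
    have hle : Ideal.span {(mkq f) ^ (ν+1)} ≤ Ideal.span {(mkq f) ^ ν} := by
      rw [Ideal.span_le, Set.singleton_subset_iff]
      exact Ideal.mem_span_singleton'.mpr ⟨mkq f, by rw [← pow_succ']⟩
    exact Ideal.subset_span ⟨φ, hφ, x, hle hx, rfl⟩
end
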